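/- Let λ be an unrefinable partition satisfying the complement property with respect to λ_t = 2n−4 (for x ≠ n−2: x ∈ λ iff λ_t − x ∉ λ; n−2 ∉ λ), having n−2 parts and n−2 missing parts, with associated Young diagram Y = KN(S_λ) and z the index with h_{1,z+1} = n−2. Then: (i) for 0 ≤ i ≤ z−1, h_{i+1,1} = h_{1,i+1}; and (ii) for z+1 ≤ i ≤ n−2, h_{1,i+1} = h_{i,1}. -/

import Mathlib

/-- A partition into distinct parts, encoded as a `Finset ℕ` of its parts, is *refinable*
if some part can be replaced by two or more distinct positive integers, none of which is
already a part, summing to it. -/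
def Refinable (P : Finset ℕ) : Prop :=
  ∃ a ∈ P, ∃ B : Finset ℕ, 2 ≤ B.card ∧ (∀ b ∈ B, 0 < b ∧ b ∉ P) ∧ B.sum id = a

/-- The `i`-th largest element (0-based) of `P`. -/
def partDesc (P : Finset ℕ) (i : ℕ) : ℕ := ((P.sort (· ≤ ·)).reverse).getD i 0

/-- Length of the `i`-th row (0-based) of the Young diagram obtained from the numerical
set `ℕ \ P` via the Keith–Nath transformation: the number of east steps (elements of the
numerical set) preceding the north step at the `i`-th largest gap. -/
def knRow (P : Finset ℕ) (i : ℕ) : ℕ :=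
  ((Finset.range (partDesc P i)).filter (fun s => s ∉ P)).card

/-- Length of the `j`-th column (0-based) of the Keith–Nath Young diagram. -/
def knCol (P : Finset ℕ) (j : ℕ) : ℕ :=
  ((Finset.range P.card).filter (fun i => j < knRow P i)).card

/-- Hook length of the cell `(i, j)` (0-based) of the Keith–Nath Young diagram:
arm + leg + 1. -/
def knHook (P : Finset ℕ) (i j : ℕ) : ℕ := knRow P i + knCol P j - i - j - 1

/-- Total number of cells of the Keith–Nath Young diagram. -/
def knCells (P : Finset ℕ) : ℕ := ∑ i ∈ Finset.range P.card, knRow P i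

/-!
Write `s_j` for the `j`-th element of the numerical set `ℕ \ P` and `c = n - 2`. Reading off
the Keith–Nath diagram, the hook of the `i`-th cell of the first column is the `i`-th largest
part, and the hook of the `j`-th cell of the first row is `max P - s_j = 2c - s_j`; in
particular `h_{0,z} = c` forces `s_z = c`. The reflection `x ↦ 2c - x` exchanges the parts
above `2c - s_j` with the gaps below `s_j` other than `c`, so `2c - s_j` is the `j`-th largest
part when `s_j < c` and the `(j - 1)`-th largest when `s_j > c`.
-/

open Finset

theorem Nat.count_add_count_not (p : ℕ → Prop) [DecidablePred p] (n : ℕ) :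
    Nat.count p n + Nat.count (fun k => ¬ p k) n = n := by
  simp_rw [Nat.count_eq_card_filter_range]
  exact (card_filter_add_card_filter_not p).trans (card_range n)

theorem finite_setOf_mem (P : Finset ℕ) : (Set.ofPred (· ∈ P)).Finite := P.finite_toSet

@[simp]
theorem finite_setOf_mem_toFinset (P : Finset ℕ) : (finite_setOf_mem P).toFinset = P := by
  ext; simp

theorem infinite_setOf_notMem (P : Finset ℕ) : (Set.ofPred (· ∉ P)).Infinite :=
  P.finite_toSet.infinite_compl

section KeithNath

variable {P : Finset ℕ} {i j t : ℕ}

theorem partDesc_eq_nth (hi : i < #P) : partDesc P i = Nat.nth (· ∈ P) (#P - 1 - i) := by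
  rw [Nat.nth_eq_getD_sort (finite_setOf_mem P), finite_setOf_mem_toFinset, partDesc,
    List.getD_reverse _ (by simpa using hi), length_sort]

theorem count_partDesc (hi : i < #P) : Nat.count (· ∈ P) (partDesc P i) = #P - 1 - i := by
  rw [partDesc_eq_nth hi, Nat.count_nth_of_lt_card_finite (finite_setOf_mem P)]
  simp only [finite_setOf_mem_toFinset]; omega

theorem partDesc_mem (hi : i < #P) : partDesc P i ∈ P := by
  rw [partDesc_eq_nth hi]
  exact Nat.nth_mem_of_lt_card (finite_setOf_mem P)
    (by simp only [finite_setOf_mem_toFinset]; omega)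

theorem card_filter_gt_eq_card_sub_count (t : ℕ) :
    #{q ∈ P | t < q} = #P - Nat.count (· ∈ P) (t + 1) := by
  have hsplit := card_filter_add_card_filter_not (s := P) (· < t + 1)
  have hcount : Nat.count (· ∈ P) (t + 1) = #{q ∈ P | q < t + 1} := by
    rw [Nat.count_eq_card_filter_range]
    congr 1
    ext q
    simp [and_comm]
  simp only [not_lt, Nat.succ_le_iff] at hsplit
  omega

theorem card_filter_gt_partDesc (hi : i < #P) : #{q ∈ P | partDesc P i < q} = i := by
  rw [card_filter_gt_eq_card_sub_count, Nat.count_succ, if_pos (partDesc_mem hi),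
    count_partDesc hi]
  omega

theorem partDesc_card_filter_gt (ht : t ∈ P) : partDesc P #{q ∈ P | t < q} = t := by
  have hlt := Nat.count_lt_card (finite_setOf_mem P) ht
  rw [finite_setOf_mem_toFinset] at hlt
  rw [card_filter_gt_eq_card_sub_count, Nat.count_succ, if_pos ht, partDesc_eq_nth (by omega),
    show #P - 1 - (#P - (Nat.count (· ∈ P) t + 1)) = Nat.count (· ∈ P) t by omega,
    Nat.nth_count ht]

theorem card_filter_partDesc (p : ℕ → Prop) [DecidablePred p] :
    #{i ∈ range #P | p (partDesc P i)} = #{q ∈ P | p q} := by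
  refine card_nbij' (partDesc P) (fun q => #{q' ∈ P | q < q'}) ?_ ?_ ?_ ?_
  · intro i hi
    simp only [coe_filter, mem_range, Set.mem_ofPred_eq] at hi ⊢
    exact ⟨partDesc_mem hi.1, hi.2⟩
  · intro q hq
    simp only [coe_filter, mem_range, Set.mem_ofPred_eq] at hq ⊢
    rw [partDesc_card_filter_gt hq.1]
    exact ⟨card_lt_card (filter_ssubset.2 ⟨q, hq.1, lt_irrefl q⟩), hq.2⟩
  · intro i hi
    simp only [coe_filter, mem_range, Set.mem_ofPred_eq] at hi
    exact card_filter_gt_partDesc hi.1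
  · intro q hq
    simp only [coe_filter, Set.mem_ofPred_eq] at hq
    exact partDesc_card_filter_gt hq.1

theorem partDesc_zero (hne : P.Nonempty) : partDesc P 0 = P.max' hne := by
  have := partDesc_card_filter_gt (P.max'_mem hne)
  rwa [filter_false_of_mem (fun q hq => not_lt.2 (P.le_max' q hq)), card_empty] at this

theorem count_notMem_partDesc_add (hi : i < #P) :
    Nat.count (· ∉ P) (partDesc P i) + (#P - 1 - i) = partDesc P i := by
  rw [← count_partDesc hi, add_comm]
  exact Nat.count_add_count_not _ _

theorem knRow_eq_count : knRow P i = Nat.count (· ∉ P) (partDesc P i) :=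
  (Nat.count_eq_card_filter_range _ _).symm

theorem knCol_eq_card_filter : knCol P j = #{q ∈ P | Nat.nth (· ∉ P) j < q} := by
  simp_rw [knCol, knRow_eq_count, Nat.lt_nth_iff_count_lt (infinite_setOf_notMem P)]
  exact card_filter_partDesc _

theorem knCol_zero (h0 : 0 ∉ P) : knCol P 0 = #P := by
  rw [knCol_eq_card_filter, Nat.nth_zero_of_zero h0, filter_true_of_mem]
  exact fun q hq => Nat.pos_of_ne_zero (ne_of_mem_of_not_mem hq h0)

theorem knHook_zero_right (h0 : 0 ∉ P) (hi : i < #P) : knHook P i 0 = partDesc P i := by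
  have := count_notMem_partDesc_add hi
  rw [knHook, knRow_eq_count, knCol_zero h0]
  omega

theorem nth_notMem_lt_max' (hne : P.Nonempty) (hj : j + #P ≤ P.max' hne) :
    Nat.nth (· ∉ P) j < P.max' hne := by
  have hP := hne.card_pos
  have hcount := count_notMem_partDesc_add hP
  rw [partDesc_zero hne] at hcount
  rw [← Nat.lt_nth_iff_count_lt (infinite_setOf_notMem P)]
  omega

theorem knHook_zero_left (hne : P.Nonempty) (hj : Nat.nth (· ∉ P) j < P.max' hne) :
    knHook P 0 j = P.max' hne - Nat.nth (· ∉ P) j := by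
  have hinf := infinite_setOf_notMem P
  have hP := hne.card_pos
  have hrow := count_notMem_partDesc_add hP
  have hmax := count_partDesc hP
  rw [partDesc_zero hne] at hrow hmax
  have hcol := card_filter_gt_eq_card_sub_count (P := P) (Nat.nth (· ∉ P) j)
  rw [Nat.count_succ, if_neg (Nat.nth_mem_of_infinite hinf j)] at hcol
  have hsplit := Nat.count_add_count_not (· ∈ P) (Nat.nth (· ∉ P) j)
  rw [Nat.count_nth_of_infinite hinf] at hsplit
  have hmono := Nat.count_monotone (· ∈ P) hj.le
  rw [knHook, knRow_eq_count, knCol_eq_card_filter, partDesc_zero hne]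
  omega

end KeithNath

section Complement

variable {P : Finset ℕ} {c v j : ℕ}
  (hpos : ∀ q ∈ P, 0 < q) (hle : ∀ q ∈ P, q ≤ 2 * c) (hc : c ∉ P)
  (hcompl : ∀ x, 0 < x → x ≤ 2 * c → x ≠ c → (x ∈ P ↔ 2 * c - x ∉ P))
include hpos hle hc hcompl

theorem card_filter_two_mul_sub_lt (hv : v ≤ 2 * c) :
    #{q ∈ P | 2 * c - v < q} = #({k ∈ range v | k ∉ P}.erase c) := by
  refine card_nbij' (2 * c - ·) (2 * c - ·) ?_ ?_ ?_ ?_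
  · intro q hq
    simp only [coe_filter, coe_erase, Set.mem_ofPred_eq, Set.mem_sdiff,
      mem_range, Set.mem_singleton_iff] at hq ⊢
    have hqc : q ≠ c := ne_of_mem_of_not_mem hq.1 hc
    have hq2c := hle q hq.1
    exact ⟨⟨by omega, (hcompl q (hpos q hq.1) hq2c hqc).1 hq.1⟩, by omega⟩
  · intro k hk
    simp only [coe_filter, coe_erase, Set.mem_ofPred_eq, Set.mem_sdiff,
      mem_range, Set.mem_singleton_iff] at hk ⊢
    obtain ⟨⟨hkv, hkP⟩, hkc⟩ := hk
    refine ⟨(hcompl (2 * c - k) (by omega) (by omega) (by omega)).2 ?_, by omega⟩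
    rwa [show 2 * c - (2 * c - k) = k by omega]
  · intro q hq
    simp only [coe_filter, Set.mem_ofPred_eq] at hq
    have := hle q hq.1
    dsimp only
    omega
  · intro k hk
    simp only [coe_filter, coe_erase, Set.mem_ofPred_eq, Set.mem_sdiff,
      mem_range] at hk
    dsimp only
    omega

theorem partDesc_card_erase (hvP : v ∉ P) (hvc : v ≠ c) (hv : v < 2 * c) :
    partDesc P #({k ∈ range v | k ∉ P}.erase c) = 2 * c - v := by
  have hmem : 2 * c - v ∈ P := by
    refine (hcompl _ (by omega) (by omega) (by omega)).2 ?_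
    rwa [show 2 * c - (2 * c - v) = v by omega]
  rw [← card_filter_two_mul_sub_lt hpos hle hc hcompl hv.le]
  exact partDesc_card_filter_gt hmem

theorem partDesc_eq_of_nth_lt (hj : Nat.nth (· ∉ P) j < c) :
    partDesc P j = 2 * c - Nat.nth (· ∉ P) j := by
  have hinf := infinite_setOf_notMem P
  have h := partDesc_card_erase hpos hle hc hcompl (Nat.nth_mem_of_infinite hinf j) hj.ne
    (by omega)
  rwa [erase_eq_of_notMem fun hmem => lt_asymm hj (mem_range.1 (mem_filter.1 hmem).1),
    ← Nat.count_eq_card_filter_range, Nat.count_nth_of_infinite hinf] at h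

theorem partDesc_pred_eq_of_lt_nth (hj : c < Nat.nth (· ∉ P) j)
    (hj' : Nat.nth (· ∉ P) j < 2 * c) :
    partDesc P (j - 1) = 2 * c - Nat.nth (· ∉ P) j := by
  have hinf := infinite_setOf_notMem P
  have h := partDesc_card_erase hpos hle hc hcompl (Nat.nth_mem_of_infinite hinf j) hj.ne' hj'
  rwa [card_erase_of_mem (mem_filter.2 ⟨mem_range.2 hj, hc⟩),
    ← Nat.count_eq_card_filter_range, Nat.count_nth_of_infinite hinf] at h

end Complement

theorem stmt11_general (P : Finset ℕ) (n z : ℕ)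
    (hne : P.Nonempty) (hpos : ∀ p ∈ P, 0 < p)
    (hmax : P.max' hne = 2 * n - 4) (hcard : P.card = n - 2)
    (hnmem : n - 2 ∉ P)
    (hcompl : ∀ x : ℕ, 0 < x → x ≤ 2 * n - 4 → x ≠ n - 2 →
      (x ∈ P ↔ 2 * n - 4 - x ∉ P))
    (hz2 : z ≤ n - 2) (hz : knHook P 0 z = n - 2) :
    (∀ i : ℕ, i < z → knHook P i 0 = knHook P 0 i) ∧
    (∀ i : ℕ, z + 1 ≤ i → i ≤ n - 2 → knHook P 0 i = knHook P (i - 1) 0) := by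
  rw [show 2 * n - 4 = 2 * (n - 2) by omega] at hmax hcompl
  set c := n - 2
  have h0 : 0 ∉ P := fun h => (hpos 0 h).false
  have hle : ∀ q ∈ P, q ≤ 2 * c := fun q hq => hmax ▸ P.le_max' q hq
  have hinf := infinite_setOf_notMem P
  set s := Nat.nth (· ∉ P)
  have hs_lt : ∀ j ≤ c, s j < 2 * c := fun j hj =>
    hmax ▸ nth_notMem_lt_max' hne (by omega)
  have hrow : ∀ j ≤ c, knHook P 0 j = 2 * c - s j := fun j hj =>
    hmax ▸ knHook_zero_left hne (hmax ▸ hs_lt j hj)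
  have hsz : s z = c := by
    have hrow_z := hrow z hz2
    have hs_z := hs_lt z hz2
    omega
  refine ⟨fun i hi => ?_, fun i hi hic => ?_⟩
  · have hsi : s i < c := hsz ▸ (Nat.nth_lt_nth hinf).2 hi
    rw [knHook_zero_right (i := i) h0 (by omega), partDesc_eq_of_nth_lt hpos hle hnmem hcompl hsi,
      hrow i (by omega)]
  · have hsi : c < s i := hsz ▸ (Nat.nth_lt_nth hinf).2 hi
    rw [knHook_zero_right (i := i - 1) h0 (by omega),
      partDesc_pred_eq_of_lt_nth hpos hle hnmem hcompl hsi (hs_lt i hic), hrow i hic]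

/-- Quasi-symmetry between the first row and first column of the Keith–Nath Young
diagram of a maximal unrefinable partition with largest part `2n - 4` satisfying the
complement property: (0-based) `h_{i,0} = h_{0,i}` for `i < z`, and
`h_{0,i} = h_{i-1,0}` for `z + 1 ≤ i ≤ n - 2`, where `h_{0,z} = n - 2`. -/
theorem stmt11 (P : Finset ℕ) (n z : ℕ) (hn : 6 ≤ n)
    (hne : P.Nonempty) (hpos : ∀ p ∈ P, 0 < p) (hunref : ¬ Refinable P)
    (hmax : P.max' hne = 2 * n - 4) (hcard : P.card = n - 2)
    (hmiss : ((Finset.Icc 1 (P.max' hne)) \ P).card = n - 2)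
    (hnmem : n - 2 ∉ P)
    (hcompl : ∀ x : ℕ, 0 < x → x ≤ 2 * n - 4 → x ≠ n - 2 →
      (x ∈ P ↔ 2 * n - 4 - x ∉ P))
    (hz1 : 1 ≤ z) (hz2 : z ≤ n - 2) (hz : knHook P 0 z = n - 2) :
    (∀ i : ℕ, i < z → knHook P i 0 = knHook P 0 i) ∧
    (∀ i : ℕ, z + 1 ≤ i → i ≤ n - 2 → knHook P 0 i = knHook P (i - 1) 0) :=
  stmt11_general P n z hne hpos hmax hcard hnmem hcompl hz2 hz
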